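/- arXiv:0704.1246 — 2 statements merged into one kernel-verified Lean document; each statement's English description precedes it below -/
import Mathlib

section
/- Let G be an abelian group and E an abelian group with a G-action by automorphisms. Then for all X ∈ G and all e, f ∈ E, one has X⁻³ ▷ f - X⁻² ▷ (e + f) + X⁻¹ ▷ (e + f) - e = 0 if and only if X⁻² ▷ e' - X⁻¹ ▷ e' + e' = 0 for e' = X⁻¹ ▷ f - e; consequently #{(X, e, f) ∈ G × E × E : X⁻³ ▷ f - X⁻² ▷ (e+f) + X⁻¹ ▷ (e+f) = e} = #E · #{(X, e) ∈ G × E : X⁻² ▷ e - X⁻¹ ▷ e + e = 0}. -/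
lemma trefoil_pointwise {G E : Type*} [CommGroup G] [AddCommGroup E]
    [DistribMulAction G E] (X : G) (e f : E) :
    (X⁻¹ ^ 3) • f - (X⁻¹ ^ 2) • (e + f) + X⁻¹ • (e + f) - e = 0 ↔
      (X⁻¹ ^ 2) • (X⁻¹ • f - e) - X⁻¹ • (X⁻¹ • f - e) + (X⁻¹ • f - e) = 0 := by
  have h3 : (X⁻¹ ^ 3) • f = (X⁻¹ ^ 2) • (X⁻¹ • f) := by
    rw [smul_smul, ← pow_succ]
  have h2 : (X⁻¹ ^ 2) • f = X⁻¹ • (X⁻¹ • f) := by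
    rw [smul_smul, ← pow_two]
  constructor <;> intro h <;>
    · rw [smul_sub, smul_sub, smul_add, smul_add, ← h3, ← h2] at *
      rw [← h]; abel

/-- For a finite abelian group G acting on a finite abelian group E by
automorphisms: pointwise, X⁻³ ▷ f - X⁻² ▷ (e+f) + X⁻¹ ▷ (e+f) - e vanishes iff
X⁻² ▷ e' - X⁻¹ ▷ e' + e' vanishes for e' = X⁻¹ ▷ f - e; consequently
#{(X,e,f) : X⁻³ ▷ f - X⁻² ▷ (e+f) + X⁻¹ ▷ (e+f) = e}
  = #E · #{(X,e) : X⁻² ▷ e - X⁻¹ ▷ e + e = 0}. -/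
theorem trefoil_knot_eq_trefoil_arc {G E : Type*} [CommGroup G] [AddCommGroup E]
    [DistribMulAction G E] [Fintype G] [Fintype E] :
    (∀ (X : G) (e f : E),
      (X⁻¹ ^ 3) • f - (X⁻¹ ^ 2) • (e + f) + X⁻¹ • (e + f) - e = 0 ↔
      (X⁻¹ ^ 2) • (X⁻¹ • f - e) - X⁻¹ • (X⁻¹ • f - e) + (X⁻¹ • f - e) = 0) ∧
    Nat.card {p : G × E × E //
        (p.1⁻¹ ^ 3) • p.2.2 - (p.1⁻¹ ^ 2) • (p.2.1 + p.2.2) + p.1⁻¹ • (p.2.1 + p.2.2) = p.2.1}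
      = Nat.card E *
        Nat.card {q : G × E // (q.1⁻¹ ^ 2) • q.2 - q.1⁻¹ • q.2 + q.2 = 0} := by
  refine ⟨trefoil_pointwise, ?_⟩
  have key : ∀ (p : G × E × E),
      ((p.1⁻¹ ^ 3) • p.2.2 - (p.1⁻¹ ^ 2) • (p.2.1 + p.2.2) + p.1⁻¹ • (p.2.1 + p.2.2) = p.2.1)
      ↔ ((p.1⁻¹ ^ 2) • (p.1⁻¹ • p.2.2 - p.2.1) - p.1⁻¹ • (p.1⁻¹ • p.2.2 - p.2.1)
          + (p.1⁻¹ • p.2.2 - p.2.1) = 0) := by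
    intro ⟨X, e, f⟩
    rw [← trefoil_pointwise, sub_eq_zero]
  have equiv : {p : G × E × E //
        (p.1⁻¹ ^ 3) • p.2.2 - (p.1⁻¹ ^ 2) • (p.2.1 + p.2.2) + p.1⁻¹ • (p.2.1 + p.2.2) = p.2.1}
      ≃ E × {q : G × E // (q.1⁻¹ ^ 2) • q.2 - q.1⁻¹ • q.2 + q.2 = 0} := by
    refine ⟨fun p => ⟨p.1.2.1, ⟨(p.1.1, p.1.1⁻¹ • p.1.2.2 - p.1.2.1), (key p.1).mp p.2⟩⟩,
      fun ⟨c, ⟨q, hq⟩⟩ => ⟨(q.1, c, q.1 • (q.2 + c)), ?_⟩, ?_, ?_⟩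
    · rw [key]
      simp only [inv_smul_smul]
      rw [add_sub_cancel_right]; exact hq
    · rintro ⟨⟨X, e, f⟩, h⟩
      simp only [Subtype.mk.injEq, Prod.mk.injEq, true_and]
      rw [sub_add_cancel, smul_inv_smul]
    · rintro ⟨c, ⟨⟨X, e⟩, hq⟩⟩
      simp only [Subtype.mk.injEq, Prod.mk.injEq, inv_smul_smul, true_and,
        add_sub_cancel_right, and_self]
  rw [Nat.card_congr equiv, Nat.card_prod]
end

section
/- For the automorphic crossed module 𝒜ₘ = (Zₘ, Z₂, ▷), where Z₂ acts on Zₘ by sign, and odd positive integer n, the number of tuples (X, Y, e, f) ∈ Z₂ × Z₂ × Zₘ × Zₘ satisfying -(X Y)ⁿ ▷ f + Σ_{k=1}^{n-1} (XY)^{-k} ▷ (Y⁻¹ ▷ (e+f) - (e+f)) + Y⁻¹ ▷ (e+f) = e equals m² + 2m·#{a ∈ Zₘ : 2a = 0} + m·#{a ∈ Zₘ : 2na = 0}. -/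
/-- The sign action of Z₂ = Multiplicative (ZMod 2) on Zₘ: 1 ▷ a = a, (-1) ▷ a = -a. -/
def sgnActM (m : ℕ) (X : Multiplicative (ZMod 2)) (e : ZMod m) : ZMod m :=
  if Multiplicative.toAdd X = 0 then e else -e

private lemma altsum_aux {M : Type*} [AddCommGroup M] (c : M) (t : ℕ) :
    ∑ k ∈ Finset.Icc 1 (2*t), (if Even k then c else -c) = 0 := by
  induction t with
  | zero => simp
  | succ t ih =>
    have h2 : 2*(t+1) = (2*t+1)+1 := by ring
    rw [h2, Finset.sum_Icc_succ_top (by omega), Finset.sum_Icc_succ_top (by omega), ih]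
    have h3 : ¬ Even (2*t+1) := by simp [Nat.even_add_one]
    have h4 : Even (2*t+1+1) := ⟨t+1, by ring⟩
    rw [if_neg h3, if_pos h4]
    simp

/-- For 𝒜ₘ = (Zₘ, Z₂, sign action) and odd positive n, the number of
(X, Y, e, f) ∈ Z₂ × Z₂ × Zₘ × Zₘ with
-(XY)ⁿ ▷ f + Σ_{k=1}^{n-1} (XY)⁻ᵏ ▷ (Y⁻¹ ▷ (e+f) - (e+f)) + Y⁻¹ ▷ (e+f) = e
equals m² + 2m·#{a ∈ Zₘ : 2a = 0} + m·#{a ∈ Zₘ : 2na = 0}. -/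
theorem torus_link_invariant_Am (m n : ℕ) [NeZero m] (hn : Odd n) (hpos : 0 < n) :
    Nat.card {p : Multiplicative (ZMod 2) × Multiplicative (ZMod 2) × ZMod m × ZMod m //
        -(sgnActM m ((p.1 * p.2.1) ^ n) p.2.2.2)
          + (∑ k ∈ Finset.Icc 1 (n - 1),
              sgnActM m ((p.1 * p.2.1) ^ (-(k : ℤ)))
                (sgnActM m p.2.1⁻¹ (p.2.2.1 + p.2.2.2) - (p.2.2.1 + p.2.2.2)))
          + sgnActM m p.2.1⁻¹ (p.2.2.1 + p.2.2.2) = p.2.2.1}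
      = m ^ 2 + 2 * m * Nat.card {a : ZMod m // 2 * a = 0}
          + m * Nat.card {a : ZMod m // ((2 * n : ℕ) : ZMod m) * a = 0} := by
  classical
  obtain ⟨t, ht⟩ := hn
  -- basic action facts
  have e1 : ∀ c : ZMod m, sgnActM m 1 c = c := by intro c; simp [sgnActM]
  have einv : ∀ c : ZMod m, sgnActM m (Multiplicative.ofAdd (1:ZMod 2))⁻¹ c = -c := by
    intro c; simp only [sgnActM]; rw [if_neg (by decide)]
  have e2 : ∀ c : ZMod m, sgnActM m ((Multiplicative.ofAdd (1:ZMod 2))^n) c = -c := by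
    intro c
    have : Multiplicative.toAdd ((Multiplicative.ofAdd (1:ZMod 2))^n) = (1 : ZMod 2) := by
      rw [toAdd_pow, toAdd_ofAdd, nsmul_eq_mul, mul_one, ht]
      push_cast
      rw [show ((2:ZMod 2)) = 0 by decide]
      ring
    simp only [sgnActM, this]
    rw [if_neg (by decide)]
  have e3 : ∀ (k : ℕ) (c : ZMod m),
      sgnActM m ((Multiplicative.ofAdd (1:ZMod 2))^(-(k:ℤ))) c = if Even k then c else -c := by
    intro k c
    have hta : Multiplicative.toAdd ((Multiplicative.ofAdd (1:ZMod 2))^(-(k:ℤ)))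
        = ((-(k:ℤ) : ℤ) : ZMod 2) := by
      rw [toAdd_zpow, toAdd_ofAdd, zsmul_eq_mul, mul_one]
    have hcond : (((-(k:ℤ) : ℤ) : ZMod 2) = 0) ↔ Even k := by
      rw [Int.cast_neg, neg_eq_zero, ZMod.intCast_zmod_eq_zero_iff_dvd,
        Int.natCast_dvd_natCast]
      exact even_iff_two_dvd.symm
    simp only [sgnActM, hta]
    by_cases hk : Even k
    · rw [if_pos (hcond.mpr hk), if_pos hk]
    · rw [if_neg (fun h => hk (hcond.mp h)), if_neg hk]
  have altsum : ∀ c : ZMod m, ∑ k ∈ Finset.Icc 1 (n-1), (if Even k then c else -c) = 0 := by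
    intro c
    have : n - 1 = 2*t := by omega
    rw [this]; exact altsum_aux c t
  have hmul : (Multiplicative.ofAdd (1:ZMod 2)) * Multiplicative.ofAdd 1 = 1 := by decide
  have hcast : ((n-1 : ℕ) : ZMod m) = (n : ZMod m) - 1 := by
    rw [Nat.cast_sub hpos]; simp
  -- the four case conditions
  have h00 : ∀ x x1 : ZMod m,
      (-sgnActM m ((1 * 1) ^ n) x1 +
        (∑ k ∈ Finset.Icc 1 (n - 1),
          sgnActM m ((1 * 1) ^ (-(k:ℤ))) (sgnActM m 1⁻¹ (x + x1) - (x + x1))) +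
        sgnActM m 1⁻¹ (x + x1) = x) ↔ True := by
    intro x x1
    simp only [one_mul, inv_one, one_pow, one_zpow, e1, sub_self, Finset.sum_const_zero,
      iff_true]
    ring
  have h01 : ∀ x x1 : ZMod m,
      (-sgnActM m ((1 * Multiplicative.ofAdd 1) ^ n) x1 +
        (∑ k ∈ Finset.Icc 1 (n - 1),
          sgnActM m ((1 * Multiplicative.ofAdd 1) ^ (-(k:ℤ)))
            (sgnActM m (Multiplicative.ofAdd 1)⁻¹ (x + x1) - (x + x1))) +
        sgnActM m (Multiplicative.ofAdd 1)⁻¹ (x + x1) = x) ↔ 2 * x = 0 := by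
    intro x x1
    simp only [one_mul, e2, einv, e3, altsum]
    constructor <;> intro h <;> linear_combination -h
  have h10 : ∀ x x1 : ZMod m,
      (-sgnActM m ((Multiplicative.ofAdd 1 * 1) ^ n) x1 +
        (∑ k ∈ Finset.Icc 1 (n - 1),
          sgnActM m ((Multiplicative.ofAdd 1 * 1) ^ (-(k:ℤ)))
            (sgnActM m 1⁻¹ (x + x1) - (x + x1))) +
        sgnActM m 1⁻¹ (x + x1) = x) ↔ 2 * x1 = 0 := by
    intro x x1
    simp only [mul_one, inv_one, e1, e2, e3, sub_self, neg_zero, ite_self,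
      Finset.sum_const_zero, neg_neg, add_zero]
    constructor <;> intro h <;> linear_combination h
  have h11 : ∀ x x1 : ZMod m,
      (-sgnActM m ((Multiplicative.ofAdd 1 * Multiplicative.ofAdd 1) ^ n) x1 +
        (∑ k ∈ Finset.Icc 1 (n - 1),
          sgnActM m ((Multiplicative.ofAdd 1 * Multiplicative.ofAdd 1) ^ (-(k:ℤ)))
            (sgnActM m (Multiplicative.ofAdd 1)⁻¹ (x + x1) - (x + x1))) +
        sgnActM m (Multiplicative.ofAdd 1)⁻¹ (x + x1) = x) ↔
        ((2 * n : ℕ) : ZMod m) * (x + x1) = 0 := by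
    intro x x1
    simp only [hmul, one_pow, one_zpow, e1, einv, Finset.sum_const, Nat.card_Icc,
      Nat.add_sub_cancel, nsmul_eq_mul]
    rw [hcast]
    push_cast
    constructor <;> intro h <;> linear_combination -h
  rw [Nat.card_eq_fintype_card, Fintype.card_subtype, Finset.card_filter]
  simp only [Fintype.sum_prod_type]
  have hU : (Finset.univ : Finset (Multiplicative (ZMod 2))) = {1, Multiplicative.ofAdd 1} := by
    decide
  simp only [hU, Finset.sum_insert (show (1:Multiplicative (ZMod 2)) ∉
    ({Multiplicative.ofAdd 1} : Finset (Multiplicative (ZMod 2))) from by decide),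
    Finset.sum_singleton]
  simp only [h00, h01, h10, h11, if_true]
  have hA : (∑ a : ZMod m, if 2*a = 0 then 1 else 0) = Nat.card {a : ZMod m // 2*a = 0} := by
    rw [Nat.card_eq_fintype_card, Fintype.card_subtype, Finset.card_filter]
  have hB : (∑ a : ZMod m, if ((2*n : ℕ) : ZMod m)*a = 0 then 1 else 0)
      = Nat.card {a : ZMod m // ((2*n : ℕ) : ZMod m)*a = 0} := by
    rw [Nat.card_eq_fintype_card, Fintype.card_subtype, Finset.card_filter]
  have hshift : ∀ x : ZMod m,
      (∑ x1 : ZMod m, if ((2*n : ℕ) : ZMod m)*(x+x1) = 0 then 1 else 0)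
        = ∑ x1 : ZMod m, if ((2*n : ℕ) : ZMod m)*x1 = 0 then 1 else 0 := fun x =>
    Equiv.sum_comp (Equiv.addLeft x) (fun y => if ((2*n : ℕ) : ZMod m)*y = 0 then 1 else 0)
  simp only [hshift, Finset.sum_const, Finset.card_univ, ZMod.card, smul_eq_mul, mul_one,
    ← Finset.mul_sum, hA, hB]
  ring
end
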